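/- For any i, j ∈ 𝔖 with i ≺ j and ε > 0 there exists δ₁ > 0 such that for every δ ∈ (0, δ₁), every x ∈ W_i and every unit vector e ∈ S¹, there exist x' ∈ ℝ² and a unit vector e' with ‖x' − x‖ ≤ εδ, ‖e' − e‖ ≤ ε, and [x', x' + δe'] ⊆ W_j. -/

import Mathlib

open Filter

/-- Membership in the index set 𝔖: real sequences with `1 ≤ i r < N r` and `i r / N r → 0`. -/
def SSeq (N : ℕ → ℕ) (i : ℕ → ℝ) : Prop :=
  (∀ r, 1 ≤ i r ∧ i r < N r) ∧
  Tendsto (fun r => i r / (N r : ℝ)) atTop (nhds 0)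

/-- The strict relation: `i ≺ j` iff `i r > j r` for all `r` and `i r / j r → ∞`. -/
def Prec (i j : ℕ → ℝ) : Prop :=
  (∀ r, i r > j r) ∧ Tendsto (fun r => i r / j r) atTop atTop

/-- `i ≼ j` iff `i ≺ j` or `i = j`. -/
def Preceq (i j : ℕ → ℝ) : Prop := Prec i j ∨ i = j


/-- `dSeq N r = 1/(N_1 ⋯ N_r)` (with `dSeq N 0 = 1`), indices shifted to start at 0. -/
noncomputable def dSeq (N : ℕ → ℕ) : ℕ → ℝ := fun r => (∏ k ∈ Finset.range r, (N k : ℝ))⁻¹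

/-- The Euclidean norm on the plane `ℝ × ℝ`. -/
noncomputable def eNorm (v : ℝ × ℝ) : ℝ := Real.sqrt (v.1 ^ 2 + v.2 ^ 2)

/-- The set `W_i`: the complement of the union, over all levels `r` and all centres `c` in the
lattice `C_r = d_{r-1}((1/2,1/2)+ℤ²)`, of the open squares of side `i_r d_r` centred at `c`. -/
def Wset (N : ℕ → ℕ) (i : ℕ → ℝ) : Set (ℝ × ℝ) :=
  {x | ∀ r : ℕ, ∀ z : ℤ × ℤ,
    ¬ (|x.1 - dSeq N r * (1 / 2 + (z.1 : ℝ))| < i r * dSeq N (r + 1) / 2 ∧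
       |x.2 - dSeq N r * (1 / 2 + (z.2 : ℝ))| < i r * dSeq N (r + 1) / 2)}

/-!
Round `Q e` to an integer vector `(a, b)`, with `Q ≈ 2 / ε`: its direction `e'` is `ε`-close to `e`,
and every segment in direction `e'` lies on a line `b y₁ - a y₂ = c`. Let `R'` be the first level
at which the gap `(i_r - j_r) d_{r+1} / 2` between the `i`- and `j`-squares drops below `(1 + ε) δ`.
At the levels `r < R'` the segment stays within `(1 + ε) δ` of `x`, which lies outside the
`i`-squares, so it misses the `j`-squares. At the levels `r ≥ R'` the form `b y₁ - a y₂` maps the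
centres of the `j`-squares into a lattice `α_r + d_r ℤ` whose points are surrounded by intervals
of length `O(j_r d_{r+1}) = o(d_r)`, and nested intervals give a value `c` within `ε δ |(a, b)|`
of `b x₁ - a x₂` avoiding all of them; the first interval is short enough because
`i_{R'} ≫ j_{R'}` makes `j_{R'} d_{R'+1}` small compared with `δ`.
-/

lemma eNorm_eq_norm_toLp (v : ℝ × ℝ) : eNorm v = ‖WithLp.toLp 2 v‖ := by
  rw [WithLp.prod_norm_eq_of_L2]
  simp [eNorm]

lemma eNorm_smul (t : ℝ) (v : ℝ × ℝ) : eNorm (t • v) = |t| * eNorm v := by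
  rw [eNorm_eq_norm_toLp, eNorm_eq_norm_toLp, WithLp.toLp_smul, norm_smul, Real.norm_eq_abs]

lemma abs_eNorm_sub_eNorm_le (u v : ℝ × ℝ) : |eNorm u - eNorm v| ≤ eNorm (u - v) := by
  simpa only [eNorm_eq_norm_toLp, WithLp.toLp_sub] using abs_norm_sub_norm_le _ _

lemma eNorm_inv_smul_self {v : ℝ × ℝ} (hv : 0 < eNorm v) : eNorm ((eNorm v)⁻¹ • v) = 1 := by
  rw [eNorm_smul, abs_inv, abs_of_pos hv, inv_mul_cancel₀ hv.ne']

lemma norm_le_eNorm (v : ℝ × ℝ) : ‖v‖ ≤ eNorm v :=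
  norm_prod_le_iff.2 ⟨Real.abs_le_sqrt (by nlinarith), Real.abs_le_sqrt (by nlinarith)⟩

lemma eNorm_le_two_mul_norm (v : ℝ × ℝ) : eNorm v ≤ 2 * ‖v‖ := by
  have h₁ := sq_le_sq' (abs_le.1 (norm_fst_le v)).1 (abs_le.1 (norm_fst_le v)).2
  have h₂ := sq_le_sq' (abs_le.1 (norm_snd_le v)).1 (abs_le.1 (norm_snd_le v)).2
  exact Real.sqrt_le_iff.2 ⟨by positivity, by nlinarith⟩

lemma norm_inv_norm_smul_sub_le {E : Type*} [NormedAddCommGroup E] [NormedSpace ℝ E]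
    {u e : E} (hu : u ≠ 0) (he : ‖e‖ = 1) {Q : ℝ} (hQ : 0 ≤ Q) :
    ‖‖u‖⁻¹ • u - e‖ ≤ 2 * ‖u - Q • e‖ / ‖u‖ := by
  have hu' : 0 < ‖u‖ := norm_pos_iff.2 hu
  have hsplit : ‖u‖⁻¹ • u - e = ‖u‖⁻¹ • ((u - Q • e) + (Q - ‖u‖) • e) := by
    rw [smul_add, smul_sub, smul_smul, sub_smul, smul_sub, smul_smul, smul_smul,
      inv_mul_cancel₀ hu'.ne', one_smul]
    abel
  have hQu : |Q - ‖u‖| ≤ ‖u - Q • e‖ := by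
    simpa [norm_smul, he, abs_of_nonneg hQ, norm_sub_rev u] using abs_norm_sub_norm_le (Q • e) u
  rw [hsplit, norm_smul, norm_inv, norm_norm, inv_mul_le_iff₀ hu', mul_div_cancel₀ _ hu'.ne']
  calc ‖(u - Q • e) + (Q - ‖u‖) • e‖ ≤ ‖u - Q • e‖ + |Q - ‖u‖| := by
        simpa [norm_smul, he] using norm_add_le (u - Q • e) ((Q - ‖u‖) • e)
    _ ≤ 2 * ‖u - Q • e‖ := by linarith

lemma exists_int_near_smul_unit {e : ℝ × ℝ} (he : eNorm e = 1) {Q : ℝ} (hQ : 1 < Q) :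
    ∃ a b : ℤ, |(a : ℝ)| + |(b : ℝ)| ≤ 2 * Q + 1 ∧ Q - 1 ≤ eNorm (a, b) ∧
      eNorm ((eNorm (a, b))⁻¹ • ((a : ℝ), (b : ℝ)) - e) ≤ 2 / eNorm (a, b) := by
  set u : ℝ × ℝ := ((round (Q * e.1) : ℤ), (round (Q * e.2) : ℤ))
  have hround : ‖u - Q • e‖ ≤ 1 / 2 :=
    norm_prod_le_iff.2 ⟨by simpa [abs_sub_comm] using abs_sub_round (Q * e.1),
      by simpa [abs_sub_comm] using abs_sub_round (Q * e.2)⟩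
  have hnear : eNorm (u - Q • e) ≤ 1 := (eNorm_le_two_mul_norm _).trans (by linarith)
  have hQe : eNorm (Q • e) = Q := by rw [eNorm_smul, he, mul_one, abs_of_pos (by linarith)]
  have hn : Q - 1 ≤ eNorm u := by
    linarith [abs_le.1 ((abs_eNorm_sub_eNorm_le u (Q • e)).trans hnear)]
  refine ⟨round (Q * e.1), round (Q * e.2), ?_, hn, ?_⟩
  · have hQe' : ‖Q • e‖ ≤ Q := (norm_le_eNorm _).trans hQe.le
    obtain ⟨h₁, h₂⟩ := norm_prod_le_iff.1 ((norm_le_norm_add_norm_sub' u (Q • e)).trans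
      (add_le_add hQe' hround))
    simp only [Real.norm_eq_abs] at h₁ h₂
    linarith
  · have hu : WithLp.toLp 2 u ≠ 0 := by
      rw [← norm_pos_iff, ← eNorm_eq_norm_toLp]
      linarith
    have hunit : ‖WithLp.toLp 2 e‖ = 1 := by rw [← eNorm_eq_norm_toLp, he]
    simp only [eNorm_eq_norm_toLp, WithLp.toLp_sub, WithLp.toLp_smul] at hnear ⊢
    refine (norm_inv_norm_smul_sub_le hu hunit (by linarith : (0 : ℝ) ≤ Q)).trans ?_
    gcongr
    linarith

/-- Of the two windows of length `ℓ'` at the ends of `[s, s + ℓ]`, one avoids the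
`w`-neighbourhood of `α + dℤ`: they are at least `2w` apart, so a single lattice point cannot be
`w`-close to both, and two distinct lattice points are `d ≥ ℓ + 2w` apart. -/
lemma exists_Icc_forall_le_abs_sub (α d w s ℓ ℓ' : ℝ) (hw : 0 ≤ w) (hℓ' : 0 ≤ ℓ')
    (hd : ℓ + 2 * w ≤ d) (hnest : 2 * w + 2 * ℓ' ≤ ℓ) :
    ∃ s', s ≤ s' ∧ s' + ℓ' ≤ s + ℓ ∧
      ∀ c ∈ Set.Icc s' (s' + ℓ'), ∀ m : ℤ, w ≤ |c - (α + m * d)| := by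
  by_contra! hbad
  obtain ⟨u, ⟨hu₁, hu₂⟩, m, hum⟩ := hbad s le_rfl (by linarith)
  obtain ⟨v, ⟨hv₁, hv₂⟩, m', hvm'⟩ := hbad (s + ℓ - ℓ') (by linarith) (by linarith)
  obtain ⟨hum₁, hum₂⟩ := abs_lt.1 hum
  obtain ⟨hvm₁, hvm₂⟩ := abs_lt.1 hvm'
  rcases eq_or_ne m m' with rfl | hmm'
  · linarith
  · have hgap : d ≤ |((m' - m : ℤ) : ℝ)| * d := by
      refine le_mul_of_one_le_left (by linarith) ?_
      rw [← Int.cast_abs]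
      exact_mod_cast Int.one_le_abs (sub_ne_zero.2 hmm'.symm)
    have hclose : |((m' - m : ℤ) : ℝ) * d| < ℓ + 2 * w := by
      rw [abs_lt]; push_cast; constructor <;> nlinarith
    rw [abs_mul, abs_of_nonneg (by linarith : 0 ≤ d)] at hclose
    linarith

lemma exists_mem_Icc_forall_le_abs_sub (α d w ℓ : ℕ → ℝ) (s₀ : ℝ) (hw : ∀ k, 0 ≤ w k)
    (hℓ : ∀ k, 0 ≤ ℓ k) (hd : ∀ k, ℓ k + 2 * w k ≤ d k)
    (hnest : ∀ k, 2 * w k + 2 * ℓ (k + 1) ≤ ℓ k) :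
    ∃ c ∈ Set.Icc s₀ (s₀ + ℓ 0), ∀ k, ∀ m : ℤ, w k ≤ |c - (α k + m * d k)| := by
  choose next hle hge havoid using fun k t =>
    exists_Icc_forall_le_abs_sub (α k) (d k) (w k) t (ℓ k) (ℓ (k + 1)) (hw k) (hℓ (k + 1))
      (hd k) (hnest k)
  let s : ℕ → ℝ := fun k => Nat.rec s₀ next k
  have hmono : Monotone s := monotone_nat_of_le_succ fun k => hle k (s k)
  have hanti : Antitone fun k => s k + ℓ k := antitone_nat_of_succ_le fun k => hge k (s k)
  have hmem := Set.mem_iInter.1 <|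
    hmono.ciSup_mem_iInter_Icc_of_antitone hanti fun k => le_add_of_nonneg_right (hℓ k)
  exact ⟨⨆ k, s k, hmem 0, fun k => havoid k (s k) _ (hmem (k + 1))⟩

def OutsideSquares (p h : ℝ) (x : ℝ × ℝ) : Prop :=
  ∀ z : ℤ × ℤ, ¬ (|x.1 - p * (1 / 2 + (z.1 : ℝ))| < h ∧ |x.2 - p * (1 / 2 + (z.2 : ℝ))| < h)

lemma mem_Wset_iff {N : ℕ → ℕ} {i : ℕ → ℝ} {x : ℝ × ℝ} :
    x ∈ Wset N i ↔ ∀ r, OutsideSquares (dSeq N r) (i r * dSeq N (r + 1) / 2) x :=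
  Iff.rfl

lemma OutsideSquares.of_norm_sub_le {p h h' ρ : ℝ} {x y : ℝ × ℝ} (hx : OutsideSquares p h x)
    (hxy : ‖y - x‖ ≤ ρ) (hh : h' + ρ ≤ h) : OutsideSquares p h' y := by
  obtain ⟨h1, h2⟩ := norm_prod_le_iff.1 hxy
  simp only [Prod.fst_sub, Prod.snd_sub, Real.norm_eq_abs] at h1 h2
  rintro z ⟨hz1, hz2⟩
  refine hx z ⟨?_, ?_⟩
  · linarith [abs_sub_le x.1 y.1 (p * (1 / 2 + (z.1 : ℝ))), abs_sub_comm x.1 y.1]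
  · linarith [abs_sub_le x.2 y.2 (p * (1 / 2 + (z.2 : ℝ))), abs_sub_comm x.2 y.2]

lemma abs_mul_sub_mul_lt {a b u v h : ℝ} (hab : a ≠ 0 ∨ b ≠ 0) (hu : |u| < h) (hv : |v| < h) :
    |b * u - a * v| < (|a| + |b|) * h := by
  have hbu : |b| * |u| ≤ |b| * h := mul_le_mul_of_nonneg_left hu.le (abs_nonneg b)
  have hav : |a| * |v| ≤ |a| * h := mul_le_mul_of_nonneg_left hv.le (abs_nonneg a)
  calc |b * u - a * v| ≤ |b| * |u| + |a| * |v| := by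
        rw [← abs_mul, ← abs_mul]; exact abs_sub _ _
    _ < (|a| + |b|) * h := by
        rcases hab with ha | hb
        · nlinarith [mul_lt_mul_of_pos_left hv (abs_pos.2 ha)]
        · nlinarith [mul_lt_mul_of_pos_left hu (abs_pos.2 hb)]

lemma ne_zero_or_ne_zero_of_eNorm_pos {a b : ℤ} (h : 0 < eNorm (a, b)) : a ≠ 0 ∨ b ≠ 0 := by
  by_contra! hab
  obtain ⟨rfl, rfl⟩ := hab
  simp [eNorm] at h

/-- `p (b - a) / 2 + m p` are the values of `b y₁ - a y₂` at the centres of the squares. -/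
lemma outsideSquares_of_line {a b : ℤ} (hab : a ≠ 0 ∨ b ≠ 0) {p h c : ℝ}
    (hc : ∀ m : ℤ, (|(a : ℝ)| + |(b : ℝ)|) * h ≤ |c - (p * (b - a) / 2 + m * p)|)
    {y : ℝ × ℝ} (hy : b * y.1 - a * y.2 = c) : OutsideSquares p h y := by
  rintro z ⟨hz1, hz2⟩
  have hab' : (a : ℝ) ≠ 0 ∨ (b : ℝ) ≠ 0 := by exact_mod_cast hab
  have hval : c - (p * (b - a) / 2 + ((b * z.1 - a * z.2 : ℤ) : ℝ) * p)
      = b * (y.1 - p * (1 / 2 + (z.1 : ℝ))) - a * (y.2 - p * (1 / 2 + (z.2 : ℝ))) := by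
    rw [← hy]; push_cast; ring
  have := hc (b * z.1 - a * z.2)
  rw [hval] at this
  exact (abs_mul_sub_mul_lt hab' hz1 hz2).not_ge this

lemma exists_line_outsideSquares {a b : ℤ} (hab : a ≠ 0 ∨ b ≠ 0) {p h : ℕ → ℝ} {R : ℕ}
    (c₀ η : ℝ) (hp : ∀ r, 0 < p r) (hh : ∀ r, 0 ≤ h r)
    (hstep : ∀ r ≥ R, 2 * ((|(a : ℝ)| + |(b : ℝ)|) * h r) + p (r + 1) ≤ p r / 2)
    (hfirst : 2 * ((|(a : ℝ)| + |(b : ℝ)|) * h R) + p (R + 1) ≤ 2 * η) :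
    ∃ c, |c - c₀| ≤ η ∧
      ∀ r ≥ R, ∀ y : ℝ × ℝ, b * y.1 - a * y.2 = c → OutsideSquares (p r) (h r) y := by
  set K : ℝ := |(a : ℝ)| + |(b : ℝ)|
  have hw : ∀ k, 0 ≤ K * h (R + k) := fun k => mul_nonneg (by positivity) (hh _)
  have hw0 : 0 ≤ K * h R := hw 0
  let ℓ : ℕ → ℝ := fun
    | 0 => min (2 * η) (p R / 2)
    | k + 1 => p (R + k + 1) / 2
  have hℓ_le : ∀ k, ℓ k ≤ p (R + k) / 2 := fun
    | 0 => min_le_right _ _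
    | k + 1 => le_rfl
  have hℓ : ∀ k, 0 ≤ ℓ k := fun
    | 0 => le_min (by linarith [hp (R + 1), hw0]) (by linarith [hp R])
    | k + 1 => (half_pos (hp _)).le
  have hd : ∀ k, ℓ k + 2 * (K * h (R + k)) ≤ p (R + k) := fun k => by
    linarith [hℓ_le k, hstep (R + k) (Nat.le_add_right R k), hp (R + k + 1)]
  have hnest : ∀ k, 2 * (K * h (R + k)) + 2 * ℓ (k + 1) ≤ ℓ k := fun
    | 0 => by
      simp only [ℓ, add_zero]
      exact le_min (by linarith) (by linarith [hstep R le_rfl])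
    | k + 1 => by simp only [ℓ, ← add_assoc]; linarith [hstep (R + k + 1) (by omega)]
  obtain ⟨c, ⟨hc₁, hc₂⟩, hc⟩ := exists_mem_Icc_forall_le_abs_sub
    (fun k => p (R + k) * (b - a) / 2) (fun k => p (R + k)) (fun k => K * h (R + k)) ℓ
    (c₀ - η) hw hℓ hd hnest
  refine ⟨c, abs_le.2 ⟨by linarith, by linarith [min_le_left (2 * η) (p R / 2)]⟩, ?_⟩
  intro r hr y hy
  obtain ⟨k, rfl⟩ := Nat.exists_eq_add_of_le hr
  exact outsideSquares_of_line hab (hc k) hy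

lemma line_value_of_mem_segment {a b c t : ℝ} {x' y : ℝ × ℝ} (hx' : b * x'.1 - a * x'.2 = c)
    (hy : y ∈ segment ℝ x' (x' + t • (a, b))) : b * y.1 - a * y.2 = c := by
  rw [segment_eq_image'] at hy
  obtain ⟨θ, -, rfl⟩ := hy
  simp only [add_sub_cancel_left, Prod.fst_add, Prod.snd_add, Prod.smul_fst, Prod.smul_snd,
    smul_eq_mul]
  linear_combination hx'

/-- Moving `x` perpendicularly to `(a, b)` onto the line `b y₁ - a y₂ = c`, then along `(a, b)`. -/
lemma exists_segment_on_line_near (x : ℝ × ℝ) {a b c η δ : ℝ} (hn : 0 < eNorm (a, b))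
    (hδ : 0 ≤ δ) (hc : |c - (b * x.1 - a * x.2)| ≤ η * eNorm (a, b)) :
    ∃ x', eNorm (x' - x) ≤ η ∧ ∀ y ∈ segment ℝ x' (x' + δ • (eNorm (a, b))⁻¹ • (a, b)),
      b * y.1 - a * y.2 = c ∧ ‖y - x‖ ≤ η + δ := by
  set n := eNorm (a, b)
  set t := (c - (b * x.1 - a * x.2)) / n ^ 2
  have hn2 : n ^ 2 = a ^ 2 + b ^ 2 := Real.sq_sqrt (by positivity)
  have hx'x : eNorm (t • (b, -a)) ≤ η := by
    have hperp : eNorm (b, -a) = n := by simp only [n, eNorm, neg_sq, add_comm]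
    rw [eNorm_smul, hperp, abs_div, abs_of_pos (pow_pos hn 2), div_mul_eq_mul_div, sq,
      mul_div_mul_right _ _ hn.ne', div_le_iff₀ hn]
    exact hc
  have hx'c : b * (x + t • (b, -a)).1 - a * (x + t • (b, -a)).2 = c := by
    have ht : t * n ^ 2 = c - (b * x.1 - a * x.2) := div_mul_cancel₀ _ (by positivity)
    simp only [Prod.fst_add, Prod.snd_add, Prod.smul_fst, Prod.smul_snd, smul_eq_mul]
    linear_combination ht - t * hn2
  refine ⟨x + t • (b, -a), by rwa [add_sub_cancel_left], fun y hy => ?_⟩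
  refine ⟨line_value_of_mem_segment hx'c (by rwa [smul_smul] at hy), ?_⟩
  have hstep : ‖y - (x + t • (b, -a))‖ ≤ δ := by
    refine (norm_sub_le_of_mem_segment hy).trans ?_
    rw [add_sub_cancel_left]
    refine (norm_le_eNorm _).trans_eq ?_
    rw [eNorm_smul, eNorm_inv_smul_self hn, abs_of_nonneg hδ, mul_one]
  have hshift : ‖x + t • (b, -a) - x‖ ≤ η := by
    rw [add_sub_cancel_left]
    exact (norm_le_eNorm _).trans hx'x
  linarith [norm_sub_le_norm_sub_add_norm_sub y (x + t • (b, -a)) x]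

lemma dSeq_pos {N : ℕ → ℕ} (hN : ∀ r, 0 < N r) (r : ℕ) : 0 < dSeq N r :=
  inv_pos.2 <| Finset.prod_pos fun k _ => Nat.cast_pos.2 (hN k)

lemma dSeq_succ (N : ℕ → ℕ) (r : ℕ) : dSeq N (r + 1) = dSeq N r / N r := by
  rw [dSeq, dSeq, Finset.prod_range_succ, mul_inv, div_eq_mul_inv]

lemma dSeq_le_one {N : ℕ → ℕ} (hN : ∀ r, 0 < N r) (r : ℕ) : dSeq N r ≤ 1 :=
  inv_le_one_of_one_le₀ <| Finset.one_le_prod fun k _ => Nat.one_le_cast.2 (hN k)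

lemma mul_dSeq_succ_le {N : ℕ → ℕ} (hN : ∀ r, 0 < N r) {r : ℕ} {c : ℝ} (hc : 2 * c ≤ N r) :
    c * dSeq N (r + 1) ≤ dSeq N r / 2 := by
  have hNr : (0 : ℝ) < N r := Nat.cast_pos.2 (hN r)
  rw [dSeq_succ, mul_div_assoc', div_le_div_iff₀ hNr two_pos]
  nlinarith [dSeq_pos hN r]

lemma SSeq.eventually_mul_le {N : ℕ → ℕ} (hN : ∀ r, 0 < N r) {j : ℕ → ℝ} (hj : SSeq N j)
    (c : ℝ) : ∀ᶠ r in atTop, c * j r ≤ N r := by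
  filter_upwards [(hj.2.const_mul c).eventually (eventually_le_nhds (by simp : c * 0 < 1))]
    with r hr
  rwa [← mul_div_assoc, div_le_one (Nat.cast_pos.2 (hN r))] at hr

lemma Prec.eventually_mul_le_sub {i j : ℕ → ℝ} (hij : Prec i j) (hj : ∀ r, 0 < j r) (c : ℝ) :
    ∀ᶠ r in atTop, c * j r ≤ i r - j r := by
  filter_upwards [hij.2.eventually_ge_atTop (c + 1)] with r hr
  rw [le_div_iff₀ (hj r)] at hr
  linarith

lemma tendsto_sub_mul_dSeq_succ {N : ℕ → ℕ} (hN : ∀ r, 0 < N r) {i j : ℕ → ℝ} (hi : SSeq N i)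
    (hj : SSeq N j) (hij : ∀ r, j r ≤ i r) :
    Tendsto (fun r => (i r - j r) * dSeq N (r + 1)) atTop (nhds 0) := by
  refine squeeze_zero (fun r => mul_nonneg (sub_nonneg.2 (hij r)) (dSeq_pos hN _).le)
    (fun r => ?_) (by simpa [sub_div] using hi.2.sub hj.2)
  rw [dSeq_succ, mul_div_assoc', mul_div_right_comm, ← sub_div]
  exact mul_le_of_le_one_right (div_nonneg (sub_nonneg.2 (hij r)) (Nat.cast_nonneg _))
    (dSeq_le_one hN r)

lemma exists_line_outsideSquares_dSeq {N : ℕ → ℕ} (hN : ∀ r, 0 < N r) {j : ℕ → ℝ}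
    (hj : ∀ r, 1 ≤ j r) {a b : ℤ} (hab : a ≠ 0 ∨ b ≠ 0) {μ : ℝ}
    (hK : |(a : ℝ)| + |(b : ℝ)| + 1 ≤ μ) {R : ℕ} (hsparse : ∀ r ≥ R, 2 * μ * j r ≤ N r)
    (c₀ η : ℝ) (hfirst : μ * j R * dSeq N (R + 1) ≤ 2 * η) :
    ∃ c, |c - c₀| ≤ η ∧ ∀ r ≥ R, ∀ y : ℝ × ℝ,
      b * y.1 - a * y.2 = c → OutsideSquares (dSeq N r) (j r * dSeq N (r + 1) / 2) y := by
  have hle : ∀ r, 2 * ((|(a : ℝ)| + |(b : ℝ)|) * (j r * dSeq N (r + 1) / 2)) + dSeq N (r + 1)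
      ≤ μ * j r * dSeq N (r + 1) := fun r => by
    have hK' : (|(a : ℝ)| + |(b : ℝ)|) * j r + 1 ≤ μ * j r := by nlinarith [hj r]
    nlinarith [dSeq_pos hN (r + 1)]
  refine exists_line_outsideSquares hab c₀ η (dSeq_pos hN)
    (fun r => div_nonneg (mul_nonneg (zero_le_one.trans (hj r)) (dSeq_pos hN _).le) two_pos.le)
    (fun r hr => (hle r).trans (mul_dSeq_succ_le hN (by linarith [hsparse r hr])))
    ((hle R).trans hfirst)

lemma exists_first_lt_of_tendsto_zero {g : ℕ → ℝ} (hpos : ∀ r, 0 < g r)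
    (hlim : Tendsto g atTop (nhds 0)) (R : ℕ) :
    ∃ δ₁ > 0, ∀ ρ ∈ Set.Ioc 0 δ₁, ∃ R' ≥ R, (∀ r < R', ρ ≤ g r) ∧ g R' < ρ := by
  have hsmall : ∀ᶠ δ in nhdsWithin 0 (Set.Ioi 0), ∀ r ∈ Finset.range R, δ ≤ g r :=
    (eventually_all_finset _).2 fun r _ => nhdsWithin_le_nhds (eventually_le_nhds (hpos r))
  obtain ⟨δ₁, hδ₁, hδ₁pos⟩ := (hsmall.and self_mem_nhdsWithin).exists
  refine ⟨δ₁, hδ₁pos, fun ρ ⟨hρ, hρδ₁⟩ => ?_⟩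
  have hex : ∃ r, g r < ρ := (hlim.eventually (gt_mem_nhds hρ)).exists
  refine ⟨Nat.find hex, ?_, fun r hr => not_lt.1 (Nat.find_min hex hr), Nat.find_spec hex⟩
  by_contra! hlt
  exact (Nat.find_spec hex).not_ge (hρδ₁.trans (hδ₁ _ (Finset.mem_range.2 hlt)))

theorem stmt10_general (N : ℕ → ℕ) (hN : ∀ r, 1 < N r)
    (i j : ℕ → ℝ) (hi : SSeq N i) (hj : SSeq N j) (hij : Prec i j)
    (ε : ℝ) (hε : 0 < ε) :
    ∃ δ₁ > 0, ∀ δ ∈ Set.Ioo 0 δ₁, ∀ x ∈ Wset N i, ∀ e : ℝ × ℝ, eNorm e = 1 →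
      ∃ x' e' : ℝ × ℝ, eNorm e' = 1 ∧ eNorm (x' - x) ≤ ε * δ ∧ eNorm (e' - e) ≤ ε ∧
        segment ℝ x' (x' + δ • e') ⊆ Wset N j := by
  have hN₀ : ∀ r, 0 < N r := fun r => Nat.zero_lt_of_lt (hN r)
  have hj₁ : ∀ r, 1 ≤ j r := fun r => (hj.1 r).1
  set Q : ℝ := 2 / ε + 1
  set μ : ℝ := 2 * Q + 2
  obtain ⟨R, hR⟩ := ((hj.eventually_mul_le hN₀ (2 * μ)).and
    (hij.eventually_mul_le_sub (fun r => one_pos.trans_le (hj₁ r)) ((1 + ε) * μ))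
    ).exists_forall_of_atTop
  obtain ⟨δ₁, hδ₁, hlevel⟩ := exists_first_lt_of_tendsto_zero
    (g := fun r => (i r - j r) * dSeq N (r + 1) / 2)
    (fun r => by have := hij.1 r; have := dSeq_pos hN₀ (r + 1); positivity)
    (by simpa using (tendsto_sub_mul_dSeq_succ hN₀ hi hj fun r => (hij.1 r).le).div_const 2) R
  refine ⟨δ₁ / (1 + ε), by positivity, ?_⟩
  rintro δ ⟨hδ, hδδ₁⟩ x hx e he
  obtain ⟨a, b, hK, hn, he'⟩ := exists_int_near_smul_unit he (Q := Q)
    (lt_add_of_pos_left 1 (by positivity))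
  set n := eNorm (a, b)
  have hεn : 2 ≤ ε * n := by
    calc 2 = ε * (Q - 1) := by rw [add_sub_cancel_right, mul_div_cancel₀ _ hε.ne']
      _ ≤ ε * n := mul_le_mul_of_nonneg_left hn hε.le
  have hnpos : 0 < n := pos_of_mul_pos_right (by linarith) hε.le
  obtain ⟨R', hRR', hsafe, hunsafe⟩ := hlevel ((1 + ε) * δ)
    ⟨by positivity, by rw [lt_div_iff₀ (by positivity), mul_comm] at hδδ₁; exact hδδ₁.le⟩
  have hfirst : μ * j R' * dSeq N (R' + 1) ≤ 2 * (ε * δ * n) := by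
    have hgap := mul_le_mul_of_nonneg_right (hR R' hRR').2 (dSeq_pos hN₀ (R' + 1)).le
    have hμ : μ * j R' * dSeq N (R' + 1) < 2 * δ :=
      lt_of_mul_lt_mul_left (by nlinarith [hunsafe]) (by positivity : (0 : ℝ) ≤ 1 + ε)
    nlinarith [mul_le_mul_of_nonneg_left hεn hδ.le]
  obtain ⟨c, hc, hline⟩ := exists_line_outsideSquares_dSeq hN₀ hj₁
    (ne_zero_or_ne_zero_of_eNorm_pos hnpos) (by linarith)
    (fun r hr => (hR r (hRR'.trans hr)).1) (b * x.1 - a * x.2) (ε * δ * n) hfirst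
  obtain ⟨x', hx'x, hseg⟩ := exists_segment_on_line_near x hnpos hδ.le hc
  refine ⟨x', n⁻¹ • ((a : ℝ), (b : ℝ)), eNorm_inv_smul_self hnpos, hx'x,
    he'.trans ((div_le_iff₀ hnpos).2 (by linarith)), fun y hy => ?_⟩
  obtain ⟨hyc, hyx⟩ := hseg y hy
  refine mem_Wset_iff.2 fun r => ?_
  rcases lt_or_ge r R' with hr | hr
  · exact (mem_Wset_iff.1 hx r).of_norm_sub_le hyx (by linarith [hsafe r hr])
  · exact hline r hr y hyc

theorem stmt10 (N : ℕ → ℕ) (hN : ∀ r, 1 < N r)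
    (hNtend : Filter.Tendsto (fun r => (N r : ℝ)) Filter.atTop Filter.atTop)
    (i j : ℕ → ℝ) (hi : SSeq N i) (hj : SSeq N j) (hij : Prec i j)
    (ε : ℝ) (hε : 0 < ε) :
    ∃ δ₁ > 0, ∀ δ ∈ Set.Ioo 0 δ₁, ∀ x ∈ Wset N i, ∀ e : ℝ × ℝ, eNorm e = 1 →
      ∃ x' e' : ℝ × ℝ, eNorm e' = 1 ∧ eNorm (x' - x) ≤ ε * δ ∧ eNorm (e' - e) ≤ ε ∧
        segment ℝ x' (x' + δ • e') ⊆ Wset N j :=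
  stmt10_general N hN i j hi hj hij ε hε
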